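/- arXiv:1902.00230 — 4 statements merged into one kernel-verified Lean document; each statement's English description precedes it below -/
import Mathlib

section
/- For every n ≥ 1, the number of distinct permutations ρ of {1,…,n} from which the identity permutation can be obtained by a single TDRL operation equals 2^n − n. -/
/-- The TDRL operation with binary pattern `b` applied to a sequence `l`:
concatenate the entries at positions where `b` is `true` (in order)
with the entries at positions where `b` is `false` (in order). -/
def tdrl (b : List Bool) (l : List ℕ) : List ℕ :=
  ((l.zip b).filter (fun p => p.2)).map Prod.fst ++
  ((l.zip b).filter (fun p => !p.2)).map Prod.fst

/-- The mirror-TDRL operation: kept entries of the original copy followed by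
kept entries of the reversed copy. -/
def mtdrl (b : List Bool) (l : List ℕ) : List ℕ :=
  ((l.zip b).filter (fun p => p.2)).map Prod.fst ++
  (((l.zip b).filter (fun p => !p.2)).map Prod.fst).reverse

/-- The identity permutation `(1, 2, …, n)` as a list. -/
def ident (n : ℕ) : List ℕ := List.range' 1 n

/-- `l` is a permutation of `{1, …, n}`. -/
def IsPermOf (n : ℕ) (l : List ℕ) : Prop := l.Perm (ident n)

/-- Permutations obtainable from `π` by one TDRL operation. -/
def SOut (π : List ℕ) : Set (List ℕ) :=
  {ρ | ∃ b : List Bool, b.length = π.length ∧ tdrl b π = ρ}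

/-- Permutations `ρ` from which `π` is obtainable by one TDRL operation. -/
def SIn (π : List ℕ) : Set (List ℕ) :=
  {ρ | ρ.Perm π ∧ ∃ b : List Bool, b.length = ρ.length ∧ tdrl b ρ = π}

/-- Permutations obtainable from `π` by one MTDRL operation. -/
def SMOut (π : List ℕ) : Set (List ℕ) :=
  {ρ | ∃ b : List Bool, b.length = π.length ∧ mtdrl b π = ρ}

/-- Permutations `ρ` from which `π` is obtainable by one MTDRL operation. -/
def SMIn (π : List ℕ) : Set (List ℕ) :=
  {ρ | ρ.Perm π ∧ ∃ b : List Bool, b.length = ρ.length ∧ mtdrl b ρ = π}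

/-- Permutations obtainable from `π` by one bounded TDRL operation of width `k`. -/
def SOutK (k : ℕ) (π : List ℕ) : Set (List ℕ) :=
  {ρ | ∃ i, ∃ b : List Bool, i + k ≤ π.length ∧ b.length = k ∧
    ρ = π.take i ++ tdrl b ((π.drop i).take k) ++ π.drop (i + k)}

/-- Permutations `ρ` from which `π` is obtainable by one bounded TDRL of width `k`. -/
def SInK (k : ℕ) (π : List ℕ) : Set (List ℕ) :=
  {ρ | ρ.Perm π ∧ ∃ i, ∃ b : List Bool, i + k ≤ ρ.length ∧ b.length = k ∧
    π = ρ.take i ++ tdrl b ((ρ.drop i).take k) ++ ρ.drop (i + k)}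

/-- Permutations obtainable from `π` by one bounded MTDRL operation of width `k`. -/
def SMOutK (k : ℕ) (π : List ℕ) : Set (List ℕ) :=
  {ρ | ∃ i, ∃ b : List Bool, i + k ≤ π.length ∧ b.length = k ∧
    ρ = π.take i ++ mtdrl b ((π.drop i).take k) ++ π.drop (i + k)}

/-- Permutations `ρ` from which `π` is obtainable by one bounded MTDRL of width `k`. -/
def SMInK (k : ℕ) (π : List ℕ) : Set (List ℕ) :=
  {ρ | ρ.Perm π ∧ ∃ i, ∃ b : List Bool, i + k ≤ ρ.length ∧ b.length = k ∧
    π = ρ.take i ++ mtdrl b ((ρ.drop i).take k) ++ ρ.drop (i + k)}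

/-!
Reading a TDRL backwards: `tdrl b` is a bijection on lists of length `b.length`, whose inverse
`untdrl b` interleaves the first `b.count true` entries with the rest along `b`. So the
permutations producing the identity are the interleavings `untdrl b (ident n)` of `(1, …, j)`
and `(j + 1, …, n)`, `j = b.count true`, over all `2 ^ n` patterns `b`. Such a list determines
`b` through the entries `≤ j`; and if two patterns with `j < k` give the same list `ρ`, then `ρ`
is increasing both below and above `k`, hence is the identity. The identity comes exactly from
the `n + 1` patterns `true^j false^(n - j)`, leaving `2 ^ n - (n + 1) + 1` permutations.
-/

theorem List.pairwise_lt_of_filter_le_of_filter_ge {β : Type*} [LinearOrder β] {l : List β}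
    {k : β} (hk : k ∈ l) (hle : (l.filter (· ≤ k)).Pairwise (· < ·))
    (hge : (l.filter (k ≤ ·)).Pairwise (· < ·)) : l.Pairwise (· < ·) := by
  induction l with
  | nil => simp at hk
  | cons x l ih =>
    rw [List.pairwise_cons]
    by_cases hxk : x = k
    · subst hxk
      simp only [List.filter_cons, le_refl, decide_true, if_true, List.pairwise_cons,
        List.mem_filter, decide_eq_true_eq] at hle hge
      have hgt : ∀ y ∈ l, x < y := fun y hy => not_le.mp fun hyx => (hle.1 y ⟨hy, hyx⟩).not_ge hyx
      refine ⟨hgt, ?_⟩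
      rw [← List.filter_eq_self.mpr fun y hy => decide_eq_true (hgt y hy).le]
      exact hge.2
    · have hkl : k ∈ l := (List.mem_cons.mp hk).resolve_left (Ne.symm hxk)
      have hle' := hle.sublist ((List.sublist_cons_self x l).filter _)
      have hge' := hge.sublist ((List.sublist_cons_self x l).filter _)
      refine ⟨fun y hy => ?_, ih hkl hle' hge'⟩
      rcases lt_or_gt_of_ne hxk with hlt | hgt
      · by_cases hyk : y ≤ k
        · simp only [List.filter_cons, hlt.le, decide_true, if_true, List.pairwise_cons,
            List.mem_filter, decide_eq_true_eq] at hle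
          exact hle.1 y ⟨hy, hyk⟩
        · exact hlt.trans (not_le.mp hyk)
      · simp only [List.filter_cons, hgt.le, decide_true, if_true, List.pairwise_cons,
          List.mem_filter, decide_eq_true_eq] at hge
        exact absurd (hge.1 k ⟨hkl, le_rfl⟩) (lt_asymm hgt)

theorem Set.ncard_image_add_ncard_fiber {α β : Type*} {f : α → β} {s : Set α} {c : β}
    (hs : s.Finite) (hc : (s ∩ f ⁻¹' {c}).Nonempty) (hinj : Set.InjOn f (s \ f ⁻¹' {c})) :
    (f '' s).ncard + (s ∩ f ⁻¹' {c}).ncard = s.ncard + 1 := by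
  have himage : f '' s = f '' (s \ f ⁻¹' {c}) ∪ {c} := by
    obtain ⟨a, has, hac⟩ := hc
    ext y
    constructor
    · rintro ⟨x, hx, rfl⟩
      by_cases hxc : f x = c
      · exact Or.inr hxc
      · exact Or.inl ⟨x, ⟨hx, hxc⟩, rfl⟩
    · rintro (⟨x, hx, rfl⟩ | rfl)
      · exact ⟨x, hx.1, rfl⟩
      · exact ⟨a, has, hac⟩
  have hdisj : Disjoint (f '' (s \ f ⁻¹' {c})) {c} := by
    rw [Set.disjoint_singleton_right]
    rintro ⟨x, ⟨-, hx⟩, hxc⟩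
    exact hx hxc
  rw [himage, Set.ncard_union_eq hdisj (hs.sdiff.image f), hinj.ncard_image, Set.ncard_singleton,
    ← Set.ncard_inter_add_ncard_sdiff_eq_ncard s (f ⁻¹' {c}) hs]
  omega

theorem ncard_setOf_length_eq (α : Type*) [Fintype α] (n : ℕ) :
    {l : List α | l.length = n}.ncard = Fintype.card α ^ n := by
  rw [← Nat.card_coe_set_eq]
  exact (Nat.card_eq_fintype_card (α := List.Vector α n)).trans (card_vector n)

section Interleave

variable {α : Type*}

-- Once `xs` or `ys` runs out, the positions asking for it are skipped.
def interleave : List Bool → List α → List α → List α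
  | [], _, _ => []
  | true :: b, x :: xs, ys => x :: interleave b xs ys
  | true :: b, [], ys => interleave b [] ys
  | false :: b, xs, y :: ys => y :: interleave b xs ys
  | false :: b, xs, [] => interleave b xs []

variable {b : List Bool} {xs ys : List α}

theorem interleave_perm (hx : xs.length = b.count true) (hy : ys.length = b.count false) :
    (interleave b xs ys).Perm (xs ++ ys) := by
  induction b generalizing xs ys with
  | nil => simp_all [interleave]
  | cons c b ih =>
    cases c
    · obtain _ | ⟨y, ys⟩ := ys
      · simp at hy
      · simp only [List.count_cons, List.length_cons] at hx hy
        exact ((ih (by simpa using hx) (by simpa using hy)).cons y).trans List.perm_middle.symm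
    · obtain _ | ⟨x, xs⟩ := xs
      · simp at hx
      · simp only [List.count_cons, List.length_cons] at hx hy
        exact (ih (by simpa using hx) (by simpa using hy)).cons x

theorem interleave_zip_filter (hx : xs.length = b.count true) (hy : ys.length = b.count false) :
    (((interleave b xs ys).zip b).filter (fun p => p.2)).map Prod.fst = xs ∧
      (((interleave b xs ys).zip b).filter (fun p => !p.2)).map Prod.fst = ys := by
  induction b generalizing xs ys with
  | nil => simp_all [interleave]
  | cons c b ih =>
    cases c
    · obtain _ | ⟨y, ys⟩ := ys
      · simp at hy
      · have := ih (xs := xs) (ys := ys) (by simpa using hx) (by simpa using hy)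
        simp [interleave, this]
    · obtain _ | ⟨x, xs⟩ := xs
      · simp at hx
      · have := ih (xs := xs) (ys := ys) (by simpa using hx) (by simpa using hy)
        simp [interleave, this]

theorem interleave_zip_filter_self (l : List α) (h : b.length = l.length) :
    interleave b (((l.zip b).filter (fun p => p.2)).map Prod.fst)
      (((l.zip b).filter (fun p => !p.2)).map Prod.fst) = l := by
  induction b generalizing l with
  | nil => cases l <;> simp_all [interleave]
  | cons c b ih =>
    obtain _ | ⟨x, l⟩ := l
    · simp at h
    · cases c <;> simp_all [interleave]

theorem length_map_fst_filter_zip (l : List α) (h : b.length = l.length) :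
    (((l.zip b).filter (fun p => p.2)).map Prod.fst).length = b.count true := by
  induction b generalizing l with
  | nil => simp
  | cons c b ih =>
    obtain _ | ⟨x, l⟩ := l
    · simp at h
    · cases c <;> simp [ih l (by simpa using h)]

theorem map_interleave (p : α → Bool) (hx : xs.length = b.count true)
    (hy : ys.length = b.count false) (hpx : ∀ x ∈ xs, p x) (hpy : ∀ y ∈ ys, p y = false) :
    (interleave b xs ys).map p = b := by
  induction b generalizing xs ys with
  | nil => simp [interleave]
  | cons c b ih =>
    cases c
    · obtain _ | ⟨y, ys⟩ := ys
      · simp at hy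
      · simp_all [interleave]
    · obtain _ | ⟨x, xs⟩ := xs
      · simp at hx
      · simp_all [interleave]

theorem filter_interleave_of_right (p : α → Bool) (hx : xs.length = b.count true)
    (hpy : ∀ y ∈ ys, p y = false) : (interleave b xs ys).filter p = xs.filter p := by
  induction b generalizing xs ys with
  | nil => simp_all [interleave]
  | cons c b ih =>
    cases c
    · cases ys <;> simp_all [interleave]
    · obtain _ | ⟨x, xs⟩ := xs
      · simp at hx
      · simp_all [interleave, List.filter_cons]

theorem filter_interleave_of_left (p : α → Bool) (hy : ys.length = b.count false)
    (hpx : ∀ x ∈ xs, p x = false) : (interleave b xs ys).filter p = ys.filter p := by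
  induction b generalizing xs ys with
  | nil => simp_all [interleave]
  | cons c b ih =>
    cases c
    · obtain _ | ⟨y, ys⟩ := ys
      · simp at hy
      · simp_all [interleave, List.filter_cons]
    · cases xs <;> simp_all [interleave]

theorem interleave_replicate_false (m : ℕ) (hy : ys.length = m) :
    interleave (List.replicate m false) xs ys = ys := by
  induction m generalizing ys with
  | zero => simp_all [interleave]
  | succ m ih =>
    obtain _ | ⟨y, ys⟩ := ys
    · simp at hy
    · simp_all [List.replicate_succ, interleave]

theorem interleave_replicate_true_append (j : ℕ) (hx : xs.length = j) :
    interleave (List.replicate j true ++ b) xs ys = xs ++ interleave b [] ys := by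
  induction j generalizing xs with
  | zero => simp_all
  | succ j ih =>
    obtain _ | ⟨x, xs⟩ := xs
    · simp at hx
    · simp_all [List.replicate_succ, interleave]

end Interleave

def untdrl (b : List Bool) (l : List ℕ) : List ℕ :=
  interleave b (l.take (b.count true)) (l.drop (b.count true))

section Untdrl

variable {b : List Bool} {l : List ℕ}

theorem length_take_count_true (h : l.length = b.length) :
    (l.take (b.count true)).length = b.count true := by
  simpa [h] using List.count_le_length (a := true) (l := b)

theorem length_drop_count_true (h : l.length = b.length) :
    (l.drop (b.count true)).length = b.count false := by
  rw [List.length_drop, h, ← List.count_true_add_count_false b, Nat.add_sub_cancel_left]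

theorem untdrl_perm (h : l.length = b.length) : (untdrl b l).Perm l := by
  simpa [untdrl] using interleave_perm (length_take_count_true h) (length_drop_count_true h)

theorem tdrl_untdrl (h : l.length = b.length) : tdrl b (untdrl b l) = l := by
  obtain ⟨hxs, hys⟩ := interleave_zip_filter (length_take_count_true h) (length_drop_count_true h)
  rw [tdrl, untdrl, hxs, hys, List.take_append_drop]

theorem untdrl_tdrl (h : b.length = l.length) : untdrl b (tdrl b l) = l := by
  have hlen := length_map_fst_filter_zip l h
  rw [untdrl, tdrl, List.take_left' hlen, List.drop_left' hlen]
  exact interleave_zip_filter_self l h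

theorem untdrl_replicate (j m : ℕ) (h : l.length = j + m) :
    untdrl (List.replicate j true ++ List.replicate m false) l = l := by
  simp only [untdrl, List.count_append, List.count_replicate_self, List.count_replicate]
  rw [interleave_replicate_true_append j (by simp; omega),
    interleave_replicate_false m (by simp; omega)]
  simp

end Untdrl

theorem SIn_eq_image_untdrl (π : List ℕ) :
    SIn π = (untdrl · π) '' {b | b.length = π.length} := by
  ext ρ
  constructor
  · rintro ⟨hperm, b, hb, rfl⟩
    exact ⟨b, hb.trans hperm.length_eq, untdrl_tdrl hb⟩
  · rintro ⟨b, hb, rfl⟩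
    have hperm := untdrl_perm hb.symm
    exact ⟨hperm, b, hb.trans hperm.length_eq.symm, tdrl_untdrl hb.symm⟩

section Ident

variable {n : ℕ} {b b' : List Bool}

theorem count_false_eq_sub_count_true (hb : b.length = n) : b.count false = n - b.count true := by
  have := List.count_true_add_count_false b
  omega

theorem untdrl_ident (hb : b.length = n) :
    untdrl b (ident n) = interleave b (List.range' 1 (b.count true))
      (List.range' (1 + b.count true) (n - b.count true)) := by
  have hc : b.count true ≤ n := hb ▸ List.count_le_length
  rw [untdrl, ident, List.take_range'_of_length_ge hc, List.drop_range', Nat.mul_one]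

theorem untdrl_ident_perm (hb : b.length = n) : (untdrl b (ident n)).Perm (ident n) :=
  untdrl_perm (by simp [ident, hb])

theorem eq_of_untdrl_ident_eq_of_count_eq (hb : b.length = n) (hb' : b'.length = n)
    (he : untdrl b (ident n) = untdrl b' (ident n)) (hc : b.count true = b'.count true) :
    b = b' := by
  have recover : ∀ {c : List Bool}, c.length = n →
      (untdrl c (ident n)).map (fun a => decide (a ≤ c.count true)) = c := fun {c} hcn => by
    rw [untdrl_ident hcn]
    exact map_interleave _ (by simp) (by simp [count_false_eq_sub_count_true hcn])
      (by simp; omega) (by simp; omega)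
  rw [← recover hb, ← recover hb', he, hc]

theorem untdrl_ident_eq_ident_of_count_lt (hb : b.length = n) (hb' : b'.length = n)
    (he : untdrl b (ident n) = untdrl b' (ident n)) (hlt : b.count true < b'.count true) :
    untdrl b (ident n) = ident n := by
  set k := b'.count true
  have hperm := untdrl_ident_perm hb
  have hkn : k ≤ n := hb' ▸ List.count_le_length
  have hk : k ∈ untdrl b (ident n) := by
    rw [hperm.mem_iff, ident, List.mem_range'_1]
    omega
  have hle : ((untdrl b (ident n)).filter (· ≤ k)).Pairwise (· < ·) := by
    rw [he, untdrl_ident hb', filter_interleave_of_right _ (by simp)]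
    · exact List.Pairwise.filter _ List.pairwise_lt_range'
    · intro y hy
      simp only [List.mem_range'_1] at hy
      simp only [decide_eq_false_iff_not, not_le]
      omega
  have hge : ((untdrl b (ident n)).filter (k ≤ ·)).Pairwise (· < ·) := by
    rw [untdrl_ident hb, filter_interleave_of_left]
    · exact List.Pairwise.filter _ List.pairwise_lt_range'
    · simp [count_false_eq_sub_count_true hb]
    · intro x hx
      simp only [List.mem_range'_1] at hx
      simp only [decide_eq_false_iff_not, not_le]
      omega
  exact hperm.eq_of_pairwise' (List.pairwise_lt_of_filter_le_of_filter_ge hk hle hge)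
    List.pairwise_lt_range'

theorem eq_of_untdrl_ident_eq (hb : b.length = n) (hb' : b'.length = n)
    (he : untdrl b (ident n) = untdrl b' (ident n)) (hne : untdrl b (ident n) ≠ ident n) :
    b = b' := by
  rcases lt_trichotomy (b.count true) (b'.count true) with hlt | heq | hgt
  · exact absurd (untdrl_ident_eq_ident_of_count_lt hb hb' he hlt) hne
  · exact eq_of_untdrl_ident_eq_of_count_eq hb hb' he heq
  · exact absurd (he.trans (untdrl_ident_eq_ident_of_count_lt hb' hb he.symm hgt)) hne

end Ident

theorem ncard_untdrl_ident_fiber (n : ℕ) :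
    ({b : List Bool | b.length = n} ∩ (untdrl · (ident n)) ⁻¹' {ident n}).ncard = n + 1 := by
  let split : ℕ → List Bool := fun j => List.replicate j true ++ List.replicate (n - j) false
  have hcount : ∀ j ≤ n, (split j).count true = j := by simp [split, List.count_replicate]
  have hfiber : {b : List Bool | b.length = n} ∩ (untdrl · (ident n)) ⁻¹' {ident n} =
      split '' Set.Iic n := by
    ext b
    constructor
    · rintro ⟨hb, hid⟩
      have hj : b.count true ≤ n := hb ▸ List.count_le_length
      have hsplit : untdrl (split (b.count true)) (ident n) = ident n :=
        untdrl_replicate _ _ (by simp [ident]; omega)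
      refine ⟨b.count true, hj, (eq_of_untdrl_ident_eq_of_count_eq hb ?_ ?_ ?_).symm⟩
      · simp [split]; omega
      · exact hid.trans hsplit.symm
      · exact (hcount _ hj).symm
    · rintro ⟨j, hj : j ≤ n, rfl⟩
      exact ⟨by simp [split]; omega, untdrl_replicate _ _ (by simp [ident]; omega)⟩
  have hinj : Set.InjOn split (Set.Iic n) := fun i hi j hj hij => by
    rw [← hcount i hi, ← hcount j hj, hij]
  rw [hfiber, hinj.ncard_image, ← Finset.coe_Iic, Set.ncard_coe_finset, Nat.card_Iic]

theorem stmt_4_general (n : ℕ) :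
    (SIn (ident n)).ncard = 2 ^ n - n := by
  have hpatterns : {b : List Bool | b.length = n}.ncard = 2 ^ n := by
    simpa using ncard_setOf_length_eq Bool n
  have hfiber := ncard_untdrl_ident_fiber n
  have hcount := Set.ncard_image_add_ncard_fiber (f := (untdrl · (ident n)))
    (s := {b | b.length = n})
    (Set.finite_of_ncard_ne_zero (by rw [hpatterns]; positivity))
    (Set.nonempty_of_ncard_ne_zero (by rw [hfiber]; omega))
    (fun b ⟨hb, hne⟩ b' ⟨hb', _⟩ he => eq_of_untdrl_ident_eq hb hb' he hne)
  rw [hfiber, hpatterns] at hcount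
  have hident : (ident n).length = n := by simp [ident]
  rw [SIn_eq_image_untdrl, hident]
  have := Nat.lt_two_pow_self (n := n)
  omega

theorem stmt_4 (n : ℕ) (hn : 1 ≤ n) :
    (SIn (ident n)).ncard = 2 ^ n - n :=
  stmt_4_general n
end

section
/- Two TDRL operations applied to the identity permutation of {1,…,n} with binary patterns b and b' yield the same permutation if and only if b = b' or both b and b' are of the form 1^r 0^{n−r} for some 0 ≤ r ≤ n. -/
/-! Write `tdrl b l = T_b ++ F_b`, where `T_b` and `F_b` collect the entries of `l` marked `true`
and `false`; for increasing `l` both are increasing. If `T_b ++ F_b = T_b' ++ F_b'` and the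
two cuts are at the same place, then `T_b = T_b'`, which determines `b` since the entries are
distinct. Otherwise one of `T_b`, `T_b'` is a proper prefix `T ++ m` of the other and
`m` also starts the other's second part, so the common list `T ++ m ++ F` is increasing; being
a permutation of `l`, it is `l` itself. Finally `tdrl b l = l` exactly for `b = 1^r 0^(n-r)`:
otherwise an entry marked `true` is moved in front of an earlier entry marked `false`. -/

open List

section Entries

variable {α : Type*}

def trueEntries (b : List Bool) (l : List α) : List α :=
  ((l.zip b).filter (fun p => p.2)).map Prod.fst

def falseEntries (b : List Bool) (l : List α) : List α :=
  ((l.zip b).filter (fun p => !p.2)).map Prod.fst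

@[simp] theorem trueEntries_cons_true (b : List Bool) (x : α) (l : List α) :
    trueEntries (true :: b) (x :: l) = x :: trueEntries b l := by
  simp [trueEntries]

@[simp] theorem trueEntries_cons_false (b : List Bool) (x : α) (l : List α) :
    trueEntries (false :: b) (x :: l) = trueEntries b l := by
  simp [trueEntries]

@[simp] theorem falseEntries_cons_true (b : List Bool) (x : α) (l : List α) :
    falseEntries (true :: b) (x :: l) = falseEntries b l := by
  simp [falseEntries]

@[simp] theorem falseEntries_cons_false (b : List Bool) (x : α) (l : List α) :
    falseEntries (false :: b) (x :: l) = x :: falseEntries b l := by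
  simp [falseEntries]

theorem trueEntries_sublist : ∀ (b : List Bool) (l : List α), trueEntries b l <+ l
  | [], _ => by simp [trueEntries]
  | _ :: _, [] => by simp [trueEntries]
  | true :: b, x :: l => by simpa using (trueEntries_sublist b l).cons_cons x
  | false :: b, x :: l => by simpa using (trueEntries_sublist b l).cons x

theorem falseEntries_sublist : ∀ (b : List Bool) (l : List α), falseEntries b l <+ l
  | [], _ => by simp [falseEntries]
  | _ :: _, [] => by simp [falseEntries]
  | true :: b, x :: l => by simpa using (falseEntries_sublist b l).cons x
  | false :: b, x :: l => by simpa using (falseEntries_sublist b l).cons_cons x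

theorem trueEntries_replicate_false (m : ℕ) (l : List α) :
    trueEntries (replicate m false) l = [] := by
  simp only [trueEntries, map_eq_nil_iff, filter_eq_nil_iff]
  intro p hp
  simp [(mem_replicate.1 (of_mem_zip hp).2).2]

theorem falseEntries_replicate_false {m : ℕ} {l : List α} (h : l.length ≤ m) :
    falseEntries (replicate m false) l = l := by
  rw [falseEntries, filter_eq_self.2, map_fst_zip (by simpa using h)]
  intro p hp
  simp [(mem_replicate.1 (of_mem_zip hp).2).2]

theorem eq_replicate_false_of_trueEntries_eq_nil {b : List Bool} {l : List α}
    (hb : b.length ≤ l.length) (h : trueEntries b l = []) : b = replicate b.length false := by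
  rw [eq_replicate_iff]
  refine ⟨rfl, fun c hc => ?_⟩
  rw [← map_snd_zip hb, mem_map] at hc
  obtain ⟨p, hp, rfl⟩ := hc
  simpa using filter_eq_nil_iff.1 (map_eq_nil_iff.1 h) p hp

theorem eq_of_trueEntries_eq {l : List α} (hl : l.Nodup) :
    ∀ {b b' : List Bool}, b.length = l.length → b'.length = l.length →
      trueEntries b l = trueEntries b' l → b = b' := by
  induction l with
  | nil => intro b b' hb hb' _; rw [length_eq_zero_iff.1 hb, length_eq_zero_iff.1 hb']
  | cons x l ih =>
    intro b b' hb hb' h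
    obtain ⟨c, b, rfl⟩ := exists_cons_of_length_eq_add_one hb
    obtain ⟨c', b', rfl⟩ := exists_cons_of_length_eq_add_one hb'
    obtain ⟨hx, hl⟩ := nodup_cons.1 hl
    have hx' (d : List Bool) : x ∉ trueEntries d l :=
      fun h => hx ((trueEntries_sublist d l).subset h)
    replace hb : b.length = l.length := Nat.succ_injective hb
    replace hb' : b'.length = l.length := Nat.succ_injective hb'
    cases c <;> cases c' <;>
      simp only [trueEntries_cons_true, trueEntries_cons_false, cons.injEq, true_and] at h
    · rw [ih hl hb hb' h]
    · exact absurd (h ▸ mem_cons_self) (hx' b)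
    · exact absurd (h ▸ mem_cons_self) (hx' b')
    · rw [ih hl hb hb' h]

theorem List.Pairwise.append_of_overlap {R : α → α → Prop} [IsTrans α R]
    {l₁ m l₂ : List α} (h₁ : (l₁ ++ m).Pairwise R) (h₂ : (m ++ l₂).Pairwise R)
    (hm : m ≠ []) :
    (l₁ ++ m ++ l₂).Pairwise R := by
  refine pairwise_append.2 ⟨h₁, (pairwise_append.1 h₂).2.1, fun x hx y hy => ?_⟩
  have hmy : ∀ z ∈ m, R z y := fun z hz => (pairwise_append.1 h₂).2.2 z hz y hy
  rcases mem_append.1 hx with hx | hx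
  · exact _root_.trans ((pairwise_append.1 h₁).2.2 x hx _ (head_mem hm)) (hmy _ (head_mem hm))
  · exact hmy x hx

end Entries

theorem tdrl_eq_append (b : List Bool) (l : List ℕ) :
    tdrl b l = trueEntries b l ++ falseEntries b l := rfl

theorem tdrl_perm {b : List Bool} {l : List ℕ} (h : l.length ≤ b.length) : tdrl b l ~ l := by
  have := (filter_append_perm (fun p : ℕ × Bool => p.2) (l.zip b)).map Prod.fst
  rwa [map_append, map_fst_zip h] at this

theorem tdrl_replicate_append_replicate {r m : ℕ} {l : List ℕ} (hl : l.length = r + m) :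
    tdrl (replicate r true ++ replicate m false) l = l := by
  induction r generalizing l with
  | zero =>
    rw [tdrl_eq_append, replicate_zero, nil_append, trueEntries_replicate_false,
      falseEntries_replicate_false (by omega), nil_append]
  | succ r ih =>
    obtain _ | ⟨x, l⟩ := l
    · rw [length_nil] at hl; omega
    · simpa [tdrl_eq_append, replicate_succ] using ih (l := l) (by rw [length_cons] at hl; omega)

theorem eq_replicate_append_replicate_of_tdrl_eq_self {l : List ℕ} (hl : l.Nodup) :
    ∀ {b : List Bool}, b.length = l.length → tdrl b l = l →
      ∃ r ≤ l.length, b = replicate r true ++ replicate (l.length - r) false := by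
  induction l with
  | nil => intro b hb _; exact ⟨0, le_rfl, by simpa using hb⟩
  | cons x l ih =>
    intro b hb h
    obtain ⟨c, b, rfl⟩ := exists_cons_of_length_eq_add_one hb
    replace hb : b.length = l.length := Nat.succ_injective hb
    obtain ⟨hx, hl⟩ := nodup_cons.1 hl
    cases c
    · rw [tdrl_eq_append, trueEntries_cons_false, falseEntries_cons_false] at h
      have hnil : trueEntries b l = [] := by
        rcases append_eq_cons_iff.1 h with ⟨hT, -⟩ | ⟨t, hT, -⟩
        · exact hT
        · exact absurd ((trueEntries_sublist b l).subset (hT ▸ mem_cons_self)) hx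
      refine ⟨0, Nat.zero_le _, ?_⟩
      rw [eq_replicate_false_of_trueEntries_eq_nil hb.le hnil, hb]
      simp [replicate_succ]
    · rw [tdrl_eq_append, trueEntries_cons_true, falseEntries_cons_true, cons_append,
        cons.injEq] at h
      obtain ⟨r, hr, rfl⟩ := ih hl hb h.2
      exact ⟨r + 1, by simpa using hr, by simp [replicate_succ]⟩

theorem tdrl_eq_self_iff {b : List Bool} {l : List ℕ} (hl : l.Nodup)
    (hb : b.length = l.length) :
    tdrl b l = l ↔
      ∃ r ≤ l.length, b = replicate r true ++ replicate (l.length - r) false := by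
  refine ⟨eq_replicate_append_replicate_of_tdrl_eq_self hl hb, ?_⟩
  rintro ⟨r, hr, rfl⟩
  exact tdrl_replicate_append_replicate (by omega)

theorem tdrl_eq_self_of_pairwise {b : List Bool} {l : List ℕ} (hl : l.Pairwise (· < ·))
    (hb : b.length = l.length) (h : (tdrl b l).Pairwise (· < ·)) : tdrl b l = l :=
  (tdrl_perm hb.ge).eq_of_pairwise' h hl

theorem tdrl_eq_self_of_trueEntries_overlap {b b' : List Bool} {l m : List ℕ}
    (hl : l.Pairwise (· < ·)) (hb : b.length = l.length) (hm : m ≠ [])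
    (hT : trueEntries b' l = trueEntries b l ++ m)
    (hF : falseEntries b l = m ++ falseEntries b' l) : tdrl b l = l := by
  refine tdrl_eq_self_of_pairwise hl hb ?_
  rw [tdrl_eq_append, hF, ← append_assoc]
  exact .append_of_overlap (hT ▸ hl.sublist (trueEntries_sublist b' l))
    (hF ▸ hl.sublist (falseEntries_sublist b l)) hm

theorem tdrl_eq_tdrl_iff {b b' : List Bool} {l : List ℕ} (hl : l.Pairwise (· < ·))
    (hb : b.length = l.length) (hb' : b'.length = l.length) :
    tdrl b l = tdrl b' l ↔ b = b' ∨ tdrl b l = l ∧ tdrl b' l = l := by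
  refine ⟨fun h => ?_, ?_⟩
  · have hTF : trueEntries b l ++ falseEntries b l = trueEntries b' l ++ falseEntries b' l := h
    rcases append_eq_append_iff.1 hTF with ⟨m, hT, hF⟩ | ⟨m, hT, hF⟩ <;>
      obtain rfl | hm := eq_or_ne m []
    · exact .inl (eq_of_trueEntries_eq hl.nodup hb hb' (by simpa using hT.symm))
    · have := tdrl_eq_self_of_trueEntries_overlap hl hb hm hT hF
      exact .inr ⟨this, h ▸ this⟩
    · exact .inl (eq_of_trueEntries_eq hl.nodup hb hb' (by simpa using hT))
    · have := tdrl_eq_self_of_trueEntries_overlap hl hb' hm hT hF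
      exact .inr ⟨h ▸ this, this⟩
  · rintro (rfl | ⟨h, h'⟩)
    · rfl
    · rw [h, h']

theorem ident_pairwise_lt (n : ℕ) : (ident n).Pairwise (· < ·) :=
  pairwise_lt_range'

theorem stmt_5 (n : ℕ) (b b' : List Bool) (hb : b.length = n) (hb' : b'.length = n) :
    tdrl b (ident n) = tdrl b' (ident n) ↔
      b = b' ∨
      ((∃ r ≤ n, b = List.replicate r true ++ List.replicate (n - r) false) ∧
       (∃ r ≤ n, b' = List.replicate r true ++ List.replicate (n - r) false)) := by
  have hlen : (ident n).length = n := length_range'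
  have hl := ident_pairwise_lt n
  rw [← hlen] at hb hb'
  rw [tdrl_eq_tdrl_iff hl hb hb', tdrl_eq_self_iff hl.nodup hb, tdrl_eq_self_iff hl.nodup hb',
    hlen]
end

section
/- For all 2 ≤ k ≤ n, the number of distinct permutations ρ of {1,…,n} such that ρ is obtainable from the identity by a single width-k bounded TDRL operation and the identity is obtainable from ρ by a single width-k bounded TDRL operation equals (n−k+1)·C(k,2) + C(k,3) + 1. -/
/-!
A width-`k` TDRL applied to `1, …, n` produces `P ++ Q` with `P` and `Q` increasing; as both come
from one window of width `k`, every entry of `P` is less than every entry of `Q` plus `k`.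
Conversely, `1, …, n` is a TDRL of `ρ` only if `ρ` is a shuffle of `1, …, M` and `M+1, …, n`.
Together these force `ρ` to be the identity with the (possibly empty) adjacent blocks
`x+1, …, y` and `y+1, …, z` exchanged, where `z - x ≤ k`; conversely every such block swap is
reached from the identity and returns to it using the window that starts at `min x (n - k)`.
The nontrivial swaps correspond to the triples `x < y < z ≤ n` with `z - x ≤ k`, and counting
these by the width `d = z - x` gives `∑_{d=2}^{k} (d - 1)(n + 1 - d) = (n - k + 1)·C(k,2) + C(k,3)`.
-/

open List

lemma zip_replicate_length {α β : Type*} (l : List α) (c : β) :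
    l.zip (replicate l.length c) = l.map (·, c) := by
  induction l with
  | nil => rfl
  | cons a l ih => simp [replicate_succ, ih]

lemma tdrl_eq_append_sublists (b : List Bool) (l : List ℕ) :
    ∃ L₁ L₂, tdrl b l = L₁ ++ L₂ ∧ L₁ <+ l ∧ L₂ <+ l := by
  have hzip : (l.zip b).map Prod.fst <+ l := by
    rw [zip_eq_zip_take_min, map_fst_zip (by simp)]
    exact take_sublist _ _
  exact ⟨_, _, rfl, (filter_sublist.map _).trans hzip, (filter_sublist.map _).trans hzip⟩

lemma tdrl_blocks (l₁ l₂ l₃ l₄ : List ℕ) :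
    tdrl (replicate l₁.length true ++ replicate l₂.length false ++
      replicate l₃.length true ++ replicate l₄.length false) (l₁ ++ l₂ ++ l₃ ++ l₄) =
      l₁ ++ l₃ ++ l₂ ++ l₄ := by
  simp [tdrl, zip_append, zip_replicate_length, filter_map, Function.comp_def]

def boundedTdrl (k i : ℕ) (b : List Bool) (l : List ℕ) : List ℕ :=
  l.take i ++ tdrl b ((l.drop i).take k) ++ l.drop (i + k)

lemma boundedTdrl_eq_append_sublists (k i : ℕ) (b : List Bool) (l : List ℕ) :
    ∃ L₁ L₂, boundedTdrl k i b l = L₁ ++ L₂ ∧ L₁ <+ l.take (i + k) ∧ L₂ <+ l.drop i := by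
  obtain ⟨F, G, h, hF, hG⟩ := tdrl_eq_append_sublists b ((l.drop i).take k)
  refine ⟨l.take i ++ F, G ++ l.drop (i + k), by simp [boundedTdrl, h], ?_, ?_⟩
  · rw [take_add]
    exact hF.append_left _
  · rw [← take_append_drop k (l.drop i), drop_drop]
    exact hG.append_right _

lemma boundedTdrl_append {A W C : List ℕ} {k i : ℕ} (b : List Bool) (hA : A.length = i)
    (hW : W.length = k) : boundedTdrl k i b (A ++ W ++ C) = A ++ tdrl b W ++ C := by
  subst hA hW
  simp [boundedTdrl, drop_append]

@[simp] lemma length_ident (n : ℕ) : (ident n).length = n := length_range'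

lemma ident_eq_Ico (n : ℕ) : ident n = Ico 1 (n + 1) := by
  simp [ident, Ico]

lemma Ico_eq_append {a c : ℕ} {u w : List ℕ} (hac : a ≤ c) (h : Ico a c = u ++ w) :
    ∃ m, a ≤ m ∧ m ≤ c ∧ u = Ico a m ∧ w = Ico m c := by
  have hlen : u.length + w.length = c - a := by simpa [Ico.length] using (congrArg length h).symm
  refine ⟨a + u.length, by omega, by omega, ?_, ?_⟩
  · calc u = (Ico a c).take u.length := by rw [h, take_left]
      _ = Ico a (a + u.length) := by
        rw [Ico, take_range'_of_length_ge (by omega), Ico]; congr 1; omega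
  · calc w = (Ico a c).drop u.length := by rw [h, drop_left]
      _ = Ico (a + u.length) c := by rw [Ico, drop_range', Ico]; congr 1 <;> omega

lemma take_ident {n m : ℕ} (h : m ≤ n) : (ident n).take m = Ico 1 (m + 1) := by
  simp [ident, Ico, take_range'_of_length_ge h]

lemma drop_ident (n m : ℕ) : (ident n).drop m = Ico (m + 1) (n + 1) := by
  simp [ident, Ico, drop_range', Nat.add_comm]

lemma pairwise_lt_Ico_append_Ico {a b c d : ℕ} (hbc : b ≤ c) :
    (Ico a b ++ Ico c d).Pairwise (· < ·) :=
  pairwise_append.2 ⟨Ico.pairwise_lt a b, Ico.pairwise_lt c d, fun x hx y hy => by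
    rw [Ico.mem] at hx hy; omega⟩

lemma append_sublist_of_pairwise_lt {α : Type*} [Preorder α] {u v P : List α}
    (hP : P.Pairwise (· < ·)) (huv : (u ++ v).Pairwise (· < ·)) (hu : u <+ P) (hv : v <+ P) :
    u ++ v <+ P := by
  refine sublist_of_subperm_of_pairwise (subperm_of_subset ?_ ?_) huv hP
  · exact huv.imp (fun h => h.ne)
  · intro a ha
    rcases mem_append.1 ha with ha | ha
    exacts [hu.subset ha, hv.subset ha]

lemma parts_eq_Ico_append_Ico {n M : ℕ} {P Q : List ℕ} (hP : P.Pairwise (· < ·))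
    (hQ : Q.Pairwise (· < ·)) (hlen : (P ++ Q).length = n) (hM : M ≤ n)
    (h₁ : Ico 1 (M + 1) <+ P ++ Q) (h₂ : Ico (M + 1) (n + 1) <+ P ++ Q) :
    ∃ x z, x ≤ M ∧ M ≤ z ∧ z ≤ n ∧ P = Ico 1 (x + 1) ++ Ico (M + 1) (z + 1) ∧
      Q = Ico (x + 1) (M + 1) ++ Ico (z + 1) (n + 1) := by
  obtain ⟨u, w, huw, hu, hw⟩ := sublist_append_iff.1 h₁
  obtain ⟨u', w', huw', hu', hw'⟩ := sublist_append_iff.1 h₂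
  obtain ⟨x, hx, hxM, rfl, rfl⟩ := Ico_eq_append (by omega) huw
  obtain ⟨z, hMz, hzn, rfl, rfl⟩ := Ico_eq_append (by omega) huw'
  have hPsub := append_sublist_of_pairwise_lt hP (pairwise_lt_Ico_append_Ico hxM) hu hu'
  have hQsub := append_sublist_of_pairwise_lt hQ (pairwise_lt_Ico_append_Ico hMz) hw hw'
  have hPlen := hPsub.length_le
  have hQlen := hQsub.length_le
  simp only [length_append, Ico.length] at hlen hPlen hQlen
  refine ⟨x - 1, z - 1, by omega, by omega, by omega, ?_, ?_⟩
  · rw [Nat.sub_add_cancel (by omega), Nat.sub_add_cancel (by omega)]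
    exact (hPsub.eq_of_length_le (by simp only [length_append, Ico.length]; omega)).symm
  · rw [Nat.sub_add_cancel (by omega), Nat.sub_add_cancel (by omega)]
    exact (hQsub.eq_of_length_le (by simp only [length_append, Ico.length]; omega)).symm

def blockSwap (n x y z : ℕ) : List ℕ :=
  Ico 1 (x + 1) ++ Ico (y + 1) (z + 1) ++ Ico (x + 1) (y + 1) ++ Ico (z + 1) (n + 1)

lemma exists_blockSwap_of_mem {n k : ℕ} {ρ : List ℕ}
    (hρ : ρ ∈ SOutK k (ident n) ∩ SInK k (ident n)) :
    ∃ x y z, x ≤ y ∧ y ≤ z ∧ z ≤ n ∧ (x < y → y < z → z - x ≤ k) ∧ ρ = blockSwap n x y z := by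
  obtain ⟨⟨i, b, hi, -, hout⟩, hperm, j, c, -, -, hin⟩ := hρ
  change ρ = boundedTdrl k i b (ident n) at hout
  change ident n = boundedTdrl k j c ρ at hin
  obtain ⟨P, Q, hPQ, hP, hQ⟩ := boundedTdrl_eq_append_sublists k i b (ident n)
  obtain ⟨L₁, L₂, hL, hL₁, hL₂⟩ := boundedTdrl_eq_append_sublists k j c ρ
  have hlen : ρ.length = n := by rw [hperm.length_eq, length_ident]
  rw [length_ident] at hi
  rw [take_ident hi] at hP
  rw [drop_ident] at hQ
  rw [hL, ident_eq_Ico] at hin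
  obtain ⟨m, hm, hmn, rfl, rfl⟩ := Ico_eq_append (by omega) hin
  obtain ⟨M, rfl⟩ : ∃ M, m = M + 1 := ⟨m - 1, by omega⟩
  rw [hout, hPQ] at hlen hL₁ hL₂ ⊢
  obtain ⟨x, z, hxM, hMz, hzn, rfl, rfl⟩ := parts_eq_Ico_append_Ico
    ((Ico.pairwise_lt _ _).sublist hP) ((Ico.pairwise_lt _ _).sublist hQ) hlen (by omega)
    (hL₁.trans (take_sublist _ _)) (hL₂.trans (drop_sublist _ _))
  refine ⟨x, M, z, hxM, hMz, hzn, fun hx hz => ?_, by simp [blockSwap]⟩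
  have hzP : z ∈ Ico 1 (i + k + 1) :=
    hP.subset (mem_append_right _ (Ico.mem.2 ⟨by omega, by omega⟩))
  have hxQ : x + 1 ∈ Ico (i + 1) (n + 1) :=
    hQ.subset (mem_append_left _ (Ico.mem.2 ⟨le_refl _, by omega⟩))
  rw [Ico.mem] at hzP hxQ
  omega

lemma blockSwap_mem {n k x y z : ℕ} (hxy : x ≤ y) (hyz : y ≤ z) (hzn : z ≤ n) (hzx : z - x ≤ k)
    (hkn : k ≤ n) : blockSwap n x y z ∈ SOutK k (ident n) ∩ SInK k (ident n) := by
  set i := min x (n - k)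
  set A := Ico 1 (i + 1)
  set l₁ := Ico (i + 1) (x + 1)
  set l₂ := Ico (x + 1) (y + 1)
  set l₃ := Ico (y + 1) (z + 1)
  set l₄ := Ico (z + 1) (i + k + 1)
  set C := Ico (i + k + 1) (n + 1)
  have hA : A.length = i := by simp [A, Ico.length]
  have hW : (l₁ ++ l₂ ++ l₃ ++ l₄).length = k := by
    simp only [l₁, l₂, l₃, l₄, length_append, Ico.length]; omega
  have hW' : (l₁ ++ l₃ ++ l₂ ++ l₄).length = k := by
    simp only [l₁, l₂, l₃, l₄, length_append, Ico.length]; omega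
  have hid : ident n = A ++ (l₁ ++ l₂ ++ l₃ ++ l₄) ++ C := by
    simp (disch := omega) only [A, l₁, l₂, l₃, l₄, C, ident_eq_Ico, Ico.append_consecutive]
  have hswap : blockSwap n x y z = A ++ (l₁ ++ l₃ ++ l₂ ++ l₄) ++ C := by
    rw [blockSwap, ← Ico.append_consecutive (m := i + 1) (by omega) (by omega),
      ← Ico.append_consecutive (n := z + 1) (m := i + k + 1) (by omega) (by omega)]
    simp only [append_assoc]
    rfl
  have hout : blockSwap n x y z = boundedTdrl k i
      (replicate l₁.length true ++ replicate l₂.length false ++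
        replicate l₃.length true ++ replicate l₄.length false) (ident n) := by
    rw [hid, boundedTdrl_append _ hA hW, tdrl_blocks, hswap]
  have hin : ident n = boundedTdrl k i
      (replicate l₁.length true ++ replicate l₃.length false ++
        replicate l₂.length true ++ replicate l₄.length false) (blockSwap n x y z) := by
    rw [hswap, boundedTdrl_append _ hA hW', tdrl_blocks, hid]
  have hperm : blockSwap n x y z ~ ident n := by
    rw [hswap, hid]
    simp only [append_assoc, perm_append_left_iff]
    exact perm_append_comm_assoc _ _ _
  refine ⟨⟨i, _, by rw [length_ident]; omega, by simpa using hW, hout⟩, hperm, i, _,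
    by rw [hperm.length_eq, length_ident]; omega, by simpa using hW', hin⟩

lemma blockSwap_eq_ident {n x y z : ℕ} (hxy : x ≤ y) (hyz : y ≤ z) (hzn : z ≤ n)
    (h : x = y ∨ y = z) : blockSwap n x y z = ident n := by
  rcases h with rfl | rfl <;>
    simp (disch := omega) only [blockSwap, ident_eq_Ico, Ico.self_empty, append_nil,
      Ico.append_consecutive]

lemma getElem?_blockSwap_of_lt {n x y z i : ℕ} (hi : i < x) :
    (blockSwap n x y z)[i]? = some (i + 1) := by
  simp [blockSwap, getElem?_append, Ico, hi]
  omega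

lemma getElem?_blockSwap_add {n x y z j : ℕ} (hj : j < z - y) :
    (blockSwap n x y z)[x + j]? = some (y + 1 + j) := by
  simp [blockSwap, getElem?_append, Ico, hj]

lemma getElem?_blockSwap_add_sub {n x y z : ℕ} (hxy : x < y) :
    (blockSwap n x y z)[x + (z - y)]? = some (x + 1) := by
  simp [blockSwap, Ico, hxy]

lemma le_of_blockSwap_eq {n x y z x' y' z' : ℕ} (hxy : x < y) (hyz : y < z)
    (h : blockSwap n x y z = blockSwap n x' y' z') : x' ≤ x := by
  by_contra! hlt
  have hx := getElem?_blockSwap_add (n := n) (x := x) (y := y) (show 0 < z - y by omega)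
  rw [h, add_zero, getElem?_blockSwap_of_lt hlt] at hx
  simp only [Option.some.injEq] at hx
  omega

lemma blockSwap_ne_ident {n x y z : ℕ} (hxy : x < y) (hyz : y < z) (hzn : z ≤ n) :
    blockSwap n x y z ≠ ident n := fun h => by
  have := le_of_blockSwap_eq hxy hyz
    (h.trans (blockSwap_eq_ident le_rfl le_rfl hzn (Or.inl rfl)).symm)
  omega

lemma blockSwap_inj {n x y z x' y' z' : ℕ} (hxy : x < y) (hyz : y < z) (hxy' : x' < y')
    (hyz' : y' < z') (h : blockSwap n x y z = blockSwap n x' y' z') :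
    x = x' ∧ y = y' ∧ z = z' := by
  obtain rfl : x = x' :=
    le_antisymm (le_of_blockSwap_eq hxy' hyz' h.symm) (le_of_blockSwap_eq hxy hyz h)
  have hy := getElem?_blockSwap_add (n := n) (x := x) (y := y) (show 0 < z - y by omega)
  rw [h, getElem?_blockSwap_add (show 0 < z' - y' by omega)] at hy
  obtain rfl : y = y' := by simpa using hy.symm
  refine ⟨rfl, rfl, ?_⟩
  by_contra hne
  rcases Nat.lt_or_gt_of_ne hne with hlt | hlt
  · have hz := getElem?_blockSwap_add_sub (n := n) (z := z) hxy
    rw [h, getElem?_blockSwap_add (show z - y < z' - y by omega)] at hz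
    simp only [Option.some.injEq] at hz; omega
  · have hz := getElem?_blockSwap_add_sub (n := n) (z := z') hxy
    rw [← h, getElem?_blockSwap_add (show z' - y < z - y by omega)] at hz
    simp only [Option.some.injEq] at hz; omega

def swapTriples (n k : ℕ) : Finset (ℕ × ℕ × ℕ) :=
  (Finset.range (n + 1) ×ˢ Finset.range (n + 1) ×ˢ Finset.range (n + 1)).filter
    fun t => t.1 < t.2.1 ∧ t.2.1 < t.2.2 ∧ t.2.2 - t.1 ≤ k

lemma mem_swapTriples {n k x y z : ℕ} :
    (x, y, z) ∈ swapTriples n k ↔ x < y ∧ y < z ∧ z ≤ n ∧ z - x ≤ k := by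
  simp only [swapTriples, Finset.mem_filter, Finset.mem_product, Finset.mem_range]
  omega

lemma swapTriples_zero (n : ℕ) : swapTriples n 0 = ∅ := by
  ext ⟨x, y, z⟩
  simp only [mem_swapTriples, Finset.notMem_empty, iff_false]
  omega

lemma swapTriples_succ (n k : ℕ) :
    swapTriples n (k + 1) = swapTriples n k ∪
      (Finset.range (n - k) ×ˢ Finset.range k).image
        fun p => (p.1, p.1 + p.2 + 1, p.1 + k + 1) := by
  ext ⟨x, y, z⟩
  simp only [Finset.mem_union, mem_swapTriples, Finset.mem_image, Finset.mem_product,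
    Finset.mem_range, Prod.mk.injEq, Prod.exists]
  constructor
  · rintro ⟨hxy, hyz, hzn, hk⟩
    by_cases hzx : z - x ≤ k
    · exact Or.inl ⟨hxy, hyz, hzn, hzx⟩
    · exact Or.inr ⟨x, y - x - 1, ⟨by omega, by omega⟩, rfl, by omega, by omega⟩
  · rintro (h | ⟨a, b, ⟨ha, hb⟩, rfl, rfl, rfl⟩) <;> omega

lemma card_swapTriples {n k : ℕ} (hkn : k ≤ n) :
    (swapTriples n k).card = (n - k + 1) * k.choose 2 + k.choose 3 := by
  induction k with
  | zero => simp [swapTriples_zero]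
  | succ k ih =>
    have hdisj : Disjoint (swapTriples n k)
        ((Finset.range (n - k) ×ˢ Finset.range k).image
          fun p => (p.1, p.1 + p.2 + 1, p.1 + k + 1)) := by
      simp only [Finset.disjoint_left, Finset.mem_image, Finset.mem_product, Finset.mem_range,
        not_exists, not_and]
      rintro ⟨x, y, z⟩ h ⟨a, b⟩ - hab
      simp only [Prod.mk.injEq] at hab
      rw [mem_swapTriples] at h
      omega
    rw [swapTriples_succ, Finset.card_union_of_disjoint hdisj, ih (by omega),
      Finset.card_image_of_injective _ (fun p q h => by
        simp only [Prod.mk.injEq] at h; exact Prod.ext (by omega) (by omega)),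
      Finset.card_product, Finset.card_range, Finset.card_range]
    obtain ⟨m, rfl⟩ := Nat.exists_eq_add_of_le hkn
    simp only [Nat.choose_succ_succ k 1, Nat.choose_succ_succ k 2, Nat.choose_one_right,
      show k + 1 + m - k = m + 1 by omega, show k + 1 + m - (k + 1) = m by omega]
    ring

lemma inter_eq_insert_image {n k : ℕ} (hkn : k ≤ n) :
    SOutK k (ident n) ∩ SInK k (ident n) =
      ↑(insert (ident n) ((swapTriples n k).image fun t => blockSwap n t.1 t.2.1 t.2.2)) := by
  ext ρ
  simp only [Finset.coe_insert, Finset.coe_image, Set.mem_insert_iff, Set.mem_image,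
    Finset.mem_coe, Prod.exists]
  constructor
  · intro hρ
    obtain ⟨x, y, z, hxy, hyz, hzn, hk, rfl⟩ := exists_blockSwap_of_mem hρ
    by_cases h : x < y ∧ y < z
    · exact Or.inr ⟨x, y, z, mem_swapTriples.2 ⟨h.1, h.2, hzn, hk h.1 h.2⟩, rfl⟩
    · exact Or.inl (blockSwap_eq_ident hxy hyz hzn (by omega))
  · rintro (rfl | ⟨x, y, z, h, rfl⟩)
    · rw [← blockSwap_eq_ident (le_refl 0) (le_refl 0) (Nat.zero_le n) (Or.inl rfl)]
      exact blockSwap_mem le_rfl le_rfl (Nat.zero_le n) (Nat.zero_le k) hkn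
    · obtain ⟨hxy, hyz, hzn, hk⟩ := mem_swapTriples.1 h
      exact blockSwap_mem hxy.le hyz.le hzn hk hkn

theorem stmt_12_general (n k : ℕ) (hkn : k ≤ n) :
    (SOutK k (ident n) ∩ SInK k (ident n)).ncard =
      (n - k + 1) * k.choose 2 + k.choose 3 + 1 := by
  rw [inter_eq_insert_image hkn, Set.ncard_coe_finset, Finset.card_insert_of_notMem,
    Finset.card_image_of_injOn, card_swapTriples hkn]
  · rintro ⟨x, y, z⟩ ht ⟨x', y', z'⟩ ht' h
    obtain ⟨hxy, hyz, -⟩ := mem_swapTriples.1 ht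
    obtain ⟨hxy', hyz', -⟩ := mem_swapTriples.1 ht'
    obtain ⟨rfl, rfl, rfl⟩ := blockSwap_inj hxy hyz hxy' hyz' h
    rfl
  · simp only [Finset.mem_image, not_exists, not_and, Prod.forall]
    intro x y z ht
    obtain ⟨hxy, hyz, hzn, -⟩ := mem_swapTriples.1 ht
    exact blockSwap_ne_ident hxy hyz hzn

theorem stmt_12 (n k : ℕ) (hk : 2 ≤ k) (hkn : k ≤ n) :
    (SOutK k (ident n) ∩ SInK k (ident n)).ncard =
      (n - k + 1) * k.choose 2 + k.choose 3 + 1 :=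
  stmt_12_general n k hkn
end

section
/- For every n ≥ 1, the number of permutations ρ of {1,…,n} such that ρ is obtainable from the identity by one MTDRL operation and the identity is obtainable from ρ by one MTDRL operation equals n. -/
/-!
Write `ρ = s ++ t`, where the MTDRL producing `ρ` from the identity keeps `s` (increasing) and
reverses `t` (decreasing), and write the identity as `C ++ E.reverse`, where the MTDRL from `ρ`
keeps `C` and reverses `E`. Every entry of `C` is smaller than every entry of `E`, so the
increasing list `s` consists of its entries from `C` followed by its entries from `E`, and `t` of
its entries from `E` followed by at most one entry from `C` (as `C` is increasing). Hence
`ρ = C₁ ++ E ++ C₂` with `C₂` of length at most one, i.e. `ρ = A ++ B.reverse` for the split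
`A = C₁`, `B = C₂ ++ E.reverse` of the identity. Conversely all such lists qualify, and the
`n + 1` splits of the identity give exactly `n` lists: a tail of length one or zero gives the
identity itself.
-/

open List

variable {α : Type*}

def splitReverse (l : List α) (k : ℕ) : List α := l.take k ++ (l.drop k).reverse

theorem mtdrl_cons_true (b : List Bool) (a : ℕ) (l : List ℕ) :
    mtdrl (true :: b) (a :: l) = a :: mtdrl b l := by
  simp [mtdrl]

theorem mtdrl_cons_false (b : List Bool) (a : ℕ) (l : List ℕ) :
    mtdrl (false :: b) (a :: l) = mtdrl b l ++ [a] := by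
  simp [mtdrl]

theorem mtdrl_replicate_false (l : List ℕ) : mtdrl (replicate l.length false) l = l.reverse := by
  induction l with
  | nil => rfl
  | cons a l ih => rw [length_cons, replicate_succ, mtdrl_cons_false, ih, reverse_cons]

theorem mtdrl_replicate_append (A B : List ℕ) :
    mtdrl (replicate A.length true ++ replicate B.length false) (A ++ B) = A ++ B.reverse := by
  induction A with
  | nil => exact mtdrl_replicate_false B
  | cons a A ih =>
    rw [length_cons, replicate_succ, cons_append, cons_append, mtdrl_cons_true, ih, cons_append]

theorem exists_mtdrl_eq {b : List Bool} {l : List ℕ} (hb : l.length ≤ b.length) :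
    ∃ K D : List ℕ, K <+ l ∧ D <+ l ∧ (K ++ D).Perm l ∧ mtdrl b l = K ++ D.reverse := by
  have hfst : (l.zip b).map Prod.fst = l := map_fst_zip hb
  refine ⟨_, _, ?_, ?_, ?_, rfl⟩
  · simpa only [hfst] using (filter_sublist (l := l.zip b)).map Prod.fst
  · simpa only [hfst] using (filter_sublist (l := l.zip b)).map Prod.fst
  · simpa only [map_append, hfst] using (filter_append_perm (·.2) (l.zip b)).map Prod.fst

theorem append_reverse_mem_sMOut_inter_sMIn (A B : List ℕ) :
    A ++ B.reverse ∈ SMOut (A ++ B) ∩ SMIn (A ++ B) :=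
  ⟨⟨replicate A.length true ++ replicate B.length false, by simp, mtdrl_replicate_append A B⟩,
    (reverse_perm B).append_left A, replicate A.length true ++ replicate B.reverse.length false,
    by simp,
    by rw [mtdrl_replicate_append, reverse_reverse]⟩

theorem reverse_eq_self_of_pairwise_lt_of_pairwise_gt [Preorder α] :
    ∀ {l : List α}, l.Pairwise (· < ·) → l.Pairwise (· > ·) → l.reverse = l
  | [], _, _ | [_], _, _ => rfl
  | _ :: _ :: _, h₁, h₂ =>
    absurd (rel_of_pairwise_cons h₁ mem_cons_self) (lt_asymm (rel_of_pairwise_cons h₂ mem_cons_self))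

theorem exists_eq_append_reverse_of_sublist [LinearOrder α] {s t C E : List α}
    (hs : s.Pairwise (· < ·)) (ht : t.Pairwise (· > ·)) (hC : C <+ s ++ t) (hE : E <+ s ++ t)
    (hCE : (C ++ E).Perm (s ++ t)) (hsorted : (C ++ E.reverse).Pairwise (· < ·)) :
    ∃ A B, A ++ B = C ++ E.reverse ∧ s ++ t = A ++ B.reverse := by
  obtain ⟨hCinc, hEdec, hlt⟩ :
      C.Pairwise (· < ·) ∧ E.Pairwise (· > ·) ∧ ∀ c ∈ C, ∀ e ∈ E, c < e := by
    simpa [pairwise_append, pairwise_reverse] using hsorted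
  have hdisj : ∀ x ∈ s, x ∉ t := by
    have : (C ++ E).Nodup := nodup_append.mpr
      ⟨hCinc.nodup, hEdec.nodup, fun c hc e he => (hlt c hc e he).ne⟩
    exact fun x hxs hxt => (nodup_append.mp (hCE.nodup_iff.mp this)).2.2 x hxs x hxt rfl
  obtain ⟨C₁, C₂, rfl, hC₁, hC₂⟩ := sublist_append_iff.mp hC
  obtain ⟨E₁, E₂, rfl, hE₁, hE₂⟩ := sublist_append_iff.mp hE
  have hmem : ∀ x ∈ s ++ t, x ∈ C₁ ∨ x ∈ C₂ ∨ x ∈ E₁ ∨ x ∈ E₂ := fun x hx => by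
    simpa [or_assoc] using hCE.mem_iff.mpr hx
  have hs_eq : s = C₁ ++ E₁ := by
    refine Subset.antisymm_of_pairwise hs ?_ (fun x hx => ?_)
      (append_subset.mpr ⟨hC₁.subset, hE₁.subset⟩)
    · exact pairwise_append.mpr ⟨hs.sublist hC₁, hs.sublist hE₁,
        fun c hc e he => hlt c (mem_append_left _ hc) e (mem_append_left _ he)⟩
    · rcases hmem x (mem_append_left t hx) with h | h | h | h
      · exact mem_append_left _ h
      · exact absurd (hC₂.subset h) (hdisj x hx)
      · exact mem_append_right _ h
      · exact absurd (hE₂.subset h) (hdisj x hx)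
  have ht_eq : t = E₂ ++ C₂ := by
    refine Subset.antisymm_of_pairwise ht ?_ (fun x hx => ?_)
      (append_subset.mpr ⟨hE₂.subset, hC₂.subset⟩)
    · exact pairwise_append.mpr ⟨ht.sublist hE₂, ht.sublist hC₂,
        fun e he c hc => hlt c (mem_append_right _ hc) e (mem_append_right _ he)⟩
    · rcases hmem x (mem_append_right s hx) with h | h | h | h
      · exact absurd hx (hdisj x (hC₁.subset h))
      · exact mem_append_right _ h
      · exact absurd hx (hdisj x (hE₁.subset h))
      · exact mem_append_left _ h
  have hC₂rev : C₂.reverse = C₂ := reverse_eq_self_of_pairwise_lt_of_pairwise_gt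
    (hCinc.sublist (sublist_append_right _ _)) (ht.sublist hC₂)
  exact ⟨C₁, C₂ ++ (E₁ ++ E₂).reverse, by simp, by simp [hs_eq, ht_eq, hC₂rev]⟩

theorem exists_splitReverse_eq {A B l : List α} (h : A ++ B = l) (hl : l ≠ []) :
    ∃ k < l.length, splitReverse l k = A ++ B.reverse := by
  rcases eq_or_ne B [] with rfl | hB
  · refine ⟨l.length - 1, by simpa [Nat.sub_lt_iff_lt_add, length_pos_iff] using hl, ?_⟩
    rw [splitReverse, drop_length_sub_one hl, reverse_singleton, ← drop_length_sub_one hl,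
      take_append_drop, ← h, append_nil, reverse_nil, append_nil]
  · subst h
    exact ⟨A.length, by simpa [length_pos_iff] using hB, by simp [splitReverse]⟩

theorem splitReverse_injOn {l : List α} (hl : l.Nodup) :
    Set.InjOn (splitReverse l) (Set.Iio l.length) := by
  have hne : ∀ i j, i < j → j < l.length → splitReverse l i ≠ splitReverse l j := by
    intro i j hij hj heq
    have hlast : (splitReverse l i)[i]? = l[l.length - 1]? := by
      grind [splitReverse]
    have hprefix : (splitReverse l j)[i]? = l[i]? := by
      rw [splitReverse, getElem?_append_left (by simp; omega), getElem?_take_of_lt hij]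
    rw [heq, hprefix, getElem?_inj (by omega) hl] at hlast
    omega
  intro i hi j hj hij
  rcases lt_trichotomy i j with h | rfl | h
  · exact absurd hij (hne i j h hj)
  · rfl
  · exact absurd hij.symm (hne j i h hi)

theorem sMOut_inter_sMIn_eq_image {l : List ℕ} (hl : l.Pairwise (· < ·)) (hne : l ≠ []) :
    SMOut l ∩ SMIn l = splitReverse l '' Set.Iio l.length := by
  refine Set.Subset.antisymm ?_ ?_
  · rintro ρ ⟨⟨b, hb, rfl⟩, -, b', hb', hρ⟩
    obtain ⟨K, D, hK, hD, -, hKD⟩ := exists_mtdrl_eq hb.ge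
    obtain ⟨C, E, hC, hE, hCE, hCE'⟩ := exists_mtdrl_eq hb'.ge
    rw [hKD] at hC hE hCE
    rw [hCE'] at hρ
    obtain ⟨A, B, hAB, heq⟩ := exists_eq_append_reverse_of_sublist (hl.sublist hK)
      (pairwise_reverse.mpr (hl.sublist hD)) hC hE hCE (hρ ▸ hl)
    obtain ⟨k, hk, hk'⟩ := exists_splitReverse_eq (hAB.trans hρ) hne
    exact ⟨k, hk, hk'.trans (heq.symm.trans hKD.symm)⟩
  · rintro _ ⟨k, -, rfl⟩
    have := append_reverse_mem_sMOut_inter_sMIn (l.take k) (l.drop k)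
    rwa [take_append_drop] at this

theorem stmt_17 (n : ℕ) (hn : 1 ≤ n) :
    (SMOut (ident n) ∩ SMIn (ident n)).ncard = n := by
  have hsorted : (ident n).Pairwise (· < ·) := pairwise_lt_range'
  have hne : ident n ≠ [] := by rw [ident, ne_eq, range'_eq_nil_iff]; omega
  rw [sMOut_inter_sMIn_eq_image hsorted hne,
    (splitReverse_injOn hsorted.nodup).ncard_image, ← Finset.coe_Iio,
    Set.ncard_coe_finset, Nat.card_Iio, ident, length_range']
end
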